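/- arXiv:2112.02385 — 5 statements merged into one kernel-verified Lean document; each statement's English description precedes it below -/
import Mathlib

section
/- Let U be a unitary operator on ℂ³, let z ∈ ℂ³ be a unit vector, let Θ = span{z}^⊥, let Π₁ = I - (projection onto span z), and let A = Π₁U restricted to Θ (a linear map Θ → Θ). Set ω = ⟨z, Uz⟩. Then det A = conj(ω) · det U. -/
noncomputable section
open scoped InnerProductSpace
open Polynomial

abbrev E3 : Type := EuclideanSpace ℂ (Fin 3)

def Theta (z : E3) : Submodule ℂ E3 := (ℂ ∙ z)ᗮ

noncomputable def Aop (U : E3 →L[ℂ] E3) (z : E3) : Theta z →ₗ[ℂ] Theta z :=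
  ((Submodule.orthogonalProjectionOnto (Theta z)).toLinearMap).comp ((U.toLinearMap).comp (Theta z).subtype)

set_option maxHeartbeats 1000000 in
theorem stmt0 (U : E3 →L[ℂ] E3) (hU : U ∈ unitary (E3 →L[ℂ] E3))
    (z : E3) (hz : ‖z‖ = 1) :
    LinearMap.det (Aop U z) =
      (starRingEnd ℂ) ⟪z, U z⟫_ℂ * LinearMap.det (U.toLinearMap) := by
  classical
  have hz0 : z ≠ 0 := by
    intro h; rw [h, norm_zero] at hz; norm_num at hz
  -- unitary preserves inner products
  have hinner : ∀ x y : E3, ⟪U x, U y⟫_ℂ = ⟪x, y⟫_ℂ := by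
    intro x y
    have h1 : (star U * U) y = y := by rw [hU.1]; simp
    calc ⟪U x, U y⟫_ℂ = ⟪x, ContinuousLinearMap.adjoint U (U y)⟫_ℂ :=
          (ContinuousLinearMap.adjoint_inner_right U _ _).symm
      _ = ⟪x, y⟫_ℂ := by
          have : ContinuousLinearMap.adjoint U (U y) = (star U * U) y := rfl
          rw [this, h1]
  -- orthonormal basis extending z
  have hcard : Module.finrank ℂ E3 = Fintype.card (Fin 3) := by simp
  have hon : Orthonormal ℂ (({0} : Set (Fin 3)).restrict (fun _ : Fin 3 => z)) := by
    constructor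
    · intro i; exact hz
    · intro i j hij
      exact absurd (Subsingleton.elim i j) hij
  obtain ⟨b, hb⟩ := hon.exists_orthonormalBasis_extension_of_card_eq hcard
  have hb0 : b 0 = z := hb 0 rfl
  set M : Matrix (Fin 3) (Fin 3) ℂ :=
    LinearMap.toMatrix b.toBasis b.toBasis U.toLinearMap with hM
  have hMij : ∀ i j, M i j = ⟪b i, U (b j)⟫_ℂ := by
    intro i j
    rw [hM, LinearMap.toMatrix_apply, b.coe_toBasis_repr_apply, b.repr_apply_apply,
      b.coe_toBasis]
    rfl
  -- M is unitary: Mᴴ * M = 1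
  have hMunit : M.conjTranspose * M = 1 := by
    ext i j
    simp only [Matrix.mul_apply, Matrix.conjTranspose_apply, Matrix.one_apply]
    have : ∀ k, star (M k i) * M k j = ⟪U (b i), b k⟫_ℂ * ⟪b k, U (b j)⟫_ℂ := by
      intro k
      rw [hMij, hMij]
      simp only [RCLike.star_def, inner_conj_symm]
    rw [Finset.sum_congr rfl (fun k _ => this k), b.sum_inner_mul_inner, hinner]
    exact (orthonormal_iff_ite.mp b.orthonormal) i j
  -- adjugate M = det M • Mᴴ
  have hadj : M.adjugate = M.det • M.conjTranspose := by
    calc M.adjugate = 1 * M.adjugate := (one_mul _).symm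
      _ = M.conjTranspose * M * M.adjugate := by rw [hMunit]
      _ = M.conjTranspose * (M * M.adjugate) := Matrix.mul_assoc _ _ _
      _ = M.conjTranspose * (M.det • 1) := by rw [Matrix.mul_adjugate]
      _ = M.det • M.conjTranspose := by
          rw [Matrix.mul_smul, Matrix.mul_one]
  -- the vectors b 1, b 2 lie in Theta z
  have hmem : ∀ i : Fin 2, b i.succ ∈ Theta z := by
    intro i
    rw [Theta, Submodule.mem_orthogonal_singleton_iff_inner_left, ← hb0]
    exact b.orthonormal.2 (by simp [Fin.succ_ne_zero])
  set t : Fin 2 → Theta z := fun i => ⟨b i.succ, hmem i⟩ with ht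
  -- t is linearly independent
  have hli : LinearIndependent ℂ (fun i : Fin 2 => b i.succ) :=
    b.orthonormal.linearIndependent.comp Fin.succ (Fin.succ_injective 2)
  have hti : LinearIndependent ℂ t :=
    LinearIndependent.of_comp (Theta z).subtype hli
  have hrank : Fintype.card (Fin 2) = Module.finrank ℂ (Theta z) := by
    have h1 : Module.finrank ℂ (ℂ ∙ z) = 1 := finrank_span_singleton hz0
    have h2 := Submodule.finrank_add_finrank_orthogonal (K := (ℂ ∙ z : Submodule ℂ E3))
    have h3 : Module.finrank ℂ E3 = 3 := by simp
    rw [h1, h3] at h2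
    simp only [Theta, Fintype.card_fin]
    exact (Nat.add_left_cancel (h2.trans (by norm_num : 3 = 1 + 2))).symm
  set b2 : Module.Basis (Fin 2) ℂ (Theta z) := basisOfLinearIndependentOfCardEqFinrank hti hrank
    with hb2def
  have hb2' : ∀ i, b2 i = t i := fun i => by
    rw [hb2def, coe_basisOfLinearIndependentOfCardEqFinrank]
  -- expansion of U (b j.succ) in the basis b
  have hexp : ∀ j : Fin 2, U (b j.succ)
      = M 0 j.succ • b 0 + ∑ i : Fin 2, M i.succ j.succ • b i.succ := by
    intro j
    have hsum := b.sum_repr (U (b j.succ))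
    have hco : ∀ k, b.repr (U (b j.succ)) k = M k j.succ := by
      intro k
      rw [b.repr_apply_apply, hMij]
    calc U (b j.succ) = ∑ k, b.repr (U (b j.succ)) k • b k := hsum.symm
      _ = ∑ k, M k j.succ • b k := by
          exact Finset.sum_congr rfl fun k _ => by rw [hco k]
      _ = M 0 j.succ • b 0 + ∑ i : Fin 2, M i.succ j.succ • b i.succ :=
          Fin.sum_univ_succ _
  -- action of Aop on the basis
  have hzmem : z ∈ (Theta z)ᗮ :=
    (Submodule.le_orthogonal_orthogonal (ℂ ∙ z)) (Submodule.mem_span_singleton_self z)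
  have hA : ∀ j : Fin 2, Aop U z (b2 j) = ∑ i : Fin 2, M i.succ j.succ • b2 i := by
    intro j
    rw [hb2' j]
    have h0 : Aop U z (t j) = Submodule.orthogonalProjectionOnto (Theta z) (U (b j.succ)) := rfl
    rw [h0, hexp j, map_add, map_smul, map_sum]
    have hz' : Submodule.orthogonalProjectionOnto (Theta z) (b 0) = 0 := by
      rw [hb0]
      exact Submodule.orthogonalProjectionOnto_apply_of_mem_orthogonal hzmem
    rw [hz', smul_zero, zero_add]
    refine Finset.sum_congr rfl fun i _ => ?_
    rw [map_smul, hb2' i]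
    congr 1
    exact Submodule.orthogonalProjectionOnto_mem_subspace_eq_self (t i)
  -- matrix of Aop equals the minor of M
  have hAmat : LinearMap.toMatrix b2 b2 (Aop U z) = M.submatrix Fin.succ Fin.succ := by
    ext i j
    rw [LinearMap.toMatrix_apply, hA j, b2.repr_sum_self]
    rfl
  have hdetA : LinearMap.det (Aop U z) = (M.submatrix Fin.succ Fin.succ).det := by
    rw [← LinearMap.det_toMatrix b2, hAmat]
  have hminor : (M.submatrix Fin.succ Fin.succ).det = M.adjugate 0 0 := by
    rw [Matrix.adjugate_fin_succ_eq_det_submatrix]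
    simp [Fin.succAbove_zero]
  have hdetU : LinearMap.det U.toLinearMap = M.det := (LinearMap.det_toMatrix _ _).symm
  rw [hdetA, hminor, hadj, hdetU]
  simp only [Matrix.smul_apply, Matrix.conjTranspose_apply, smul_eq_mul]
  rw [hMij, hb0]
  simp only [RCLike.star_def]
  ring
end
end

section
/- Let U be a 3×3 unitary matrix, z a unit vector, Θ = span{z}^⊥, A = Π₁U|_Θ. Suppose A has a single eigenvalue λ₁ (algebraic multiplicity 2). Then A is defective (not diagonalizable) if and only if |λ₁| < 1; and if |λ₁| = 1 then A is unitary. -/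
noncomputable section
open scoped InnerProductSpace
open Polynomial

def IsUnitaryOp (z : E3) (A : Theta z →ₗ[ℂ] Theta z) : Prop :=
  ∃ f : (Theta z) ≃ₗᵢ[ℂ] (Theta z), f.toLinearEquiv.toLinearMap = A

/-- `A` is defective: it has no basis of eigenvectors. -/
def Defective (z : E3) (A : Theta z →ₗ[ℂ] Theta z) : Prop :=
  ¬ ∃ b : Module.Basis (Fin 2) ℂ (Theta z), ∀ i, ∃ μ : ℂ, A (b i) = μ • b i

open scoped ComplexConjugate

-- shortcut instances (identical to the inferred ones, but avoid a search blowup)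
noncomputable instance (z : E3) : NormedAddCommGroup (Theta z) := inferInstance
noncomputable instance (z : E3) : InnerProductSpace ℂ (Theta z) := inferInstance

set_option maxHeartbeats 1000000

lemma theta_key (U : E3 →L[ℂ] E3) (hU : U ∈ unitary (E3 →L[ℂ] E3))
    (z : E3) (hz : ‖z‖ = 1) (w₁ w₂ : Theta z) :
    ⟪w₁, w₂⟫_ℂ = conj ⟪z, U ↑w₁⟫_ℂ * ⟪z, U ↑w₂⟫_ℂ
      + ⟪Aop U z w₁, Aop U z w₂⟫_ℂ := by
  have hzero : ∀ w : Theta z, ⟪z, (w : E3)⟫_ℂ = 0 := fun w =>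
    w.2 z (Submodule.mem_span_singleton_self z)
  have hzero' : ∀ w : Theta z, ⟪(w : E3), z⟫_ℂ = 0 := fun w => by
    rw [← inner_conj_symm, hzero w, map_zero]
  have hdec : ∀ w : Theta z, (U ↑w : E3) = ⟪z, U ↑w⟫_ℂ • z + (Aop U z w : E3) := by
    intro w
    have h := Submodule.starProjection_add_starProjection_orthogonal (K := ℂ ∙ z) (U ↑w)
    rw [Submodule.starProjection_unit_singleton ℂ hz] at h
    exact h.symm
  have hzz : ⟪z, z⟫_ℂ = 1 := by
    rw [inner_self_eq_norm_sq_to_K, hz]; norm_num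
  have hun := ContinuousLinearMap.inner_map_map_of_mem_unitary hU (↑w₁ : E3) (↑w₂ : E3)
  have h1 : ⟪w₁, w₂⟫_ℂ = ⟪(w₁ : E3), (w₂ : E3)⟫_ℂ := rfl
  have h2 : ⟪Aop U z w₁, Aop U z w₂⟫_ℂ = ⟪(Aop U z w₁ : E3), (Aop U z w₂ : E3)⟫_ℂ := rfl
  rw [h1, h2, ← hun, hdec w₁, hdec w₂]
  simp only [inner_add_left, inner_add_right, inner_smul_left, inner_smul_right,
    hzz, hzero, hzero', mul_one, mul_zero, zero_add, add_zero, map_zero, zero_mul]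
  ring

lemma theta_rank (z : E3) (hz : z ≠ 0) : Module.finrank ℂ (Theta z) = 2 := by
  have h := Submodule.finrank_add_finrank_orthogonal (K := ℂ ∙ z) (E := E3)
  rw [finrank_span_singleton hz] at h
  have h3 : Module.finrank ℂ E3 = 3 := finrank_euclideanSpace_fin
  have h2 : Module.finrank ℂ (Theta z) = Module.finrank ℂ ((ℂ ∙ z)ᗮ) := rfl
  omega

/-- Given a unit vector in the 2-dimensional space `Theta z`, produce an
orthogonal unit vector spanning its orthogonal complement. -/
lemma exists_pair (z : E3) (hrank : Module.finrank ℂ (Theta z) = 2)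
    (w : Theta z) (hw : ‖w‖ = 1) :
    ∃ v : Theta z, ‖v‖ = 1 ∧ ⟪w, v⟫_ℂ = 0 ∧
      ∀ x : Theta z, ⟪w, x⟫_ℂ = 0 → x ∈ (ℂ ∙ v) := by
  have hwne : w ≠ 0 := by intro h; rw [h, norm_zero] at hw; norm_num at hw
  have hfin := Submodule.finrank_add_finrank_orthogonal (K := ℂ ∙ w) (E := (Theta z))
  rw [finrank_span_singleton hwne, hrank] at hfin
  have hWrank : Module.finrank ℂ ((ℂ ∙ w)ᗮ : Submodule ℂ (Theta z)) = 1 := by omega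
  have hWbot : ((ℂ ∙ w)ᗮ : Submodule ℂ (Theta z)) ≠ ⊥ := by
    intro h
    rw [h, finrank_bot] at hWrank
    norm_num at hWrank
  obtain ⟨v₀, hv₀W, hv₀ne⟩ := Submodule.exists_mem_ne_zero_of_ne_bot hWbot
  have hn : ‖v₀‖ ≠ 0 := norm_ne_zero_iff.mpr hv₀ne
  refine ⟨(↑(‖v₀‖⁻¹) : ℂ) • v₀, ?_, ?_, ?_⟩
  · rw [norm_smul]
    simp only [Complex.norm_real, norm_inv, norm_norm]
    exact inv_mul_cancel₀ hn
  · have hvW : (↑(‖v₀‖⁻¹) : ℂ) • v₀ ∈ (ℂ ∙ w)ᗮ := Submodule.smul_mem _ _ hv₀W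
    exact Submodule.mem_orthogonal_singleton_iff_inner_right.mp hvW
  · intro x hx
    have hvW : (↑(‖v₀‖⁻¹) : ℂ) • v₀ ∈ (ℂ ∙ w)ᗮ := Submodule.smul_mem _ _ hv₀W
    have hvne : (↑(‖v₀‖⁻¹) : ℂ) • v₀ ≠ 0 := by
      simp [smul_eq_zero, hv₀ne, hn]
    have hle : (ℂ ∙ ((↑(‖v₀‖⁻¹) : ℂ) • v₀)) ≤ (ℂ ∙ w)ᗮ :=
      (Submodule.span_singleton_le_iff_mem _ _).mpr hvW
    have heq : (ℂ ∙ ((↑(‖v₀‖⁻¹) : ℂ) • v₀)) = (ℂ ∙ w)ᗮ := by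
      apply Submodule.eq_of_le_of_finrank_eq hle
      rw [finrank_span_singleton hvne, hWrank]
    rw [heq]
    exact Submodule.mem_orthogonal_singleton_iff_inner_right.mpr hx

lemma eig_eq (U : E3 →L[ℂ] E3) (z : E3) (l1 : ℂ)
    (hchar : LinearMap.charpoly (Aop U z) = (X - C l1) ^ 2)
    (μ : ℂ) (hμ : Module.End.HasEigenvalue (Aop U z) μ) : μ = l1 := by
  have h1 : (minpoly ℂ (Aop U z)).IsRoot μ := Module.End.isRoot_of_hasEigenvalue hμ
  have hdvd : minpoly ℂ (Aop U z) ∣ LinearMap.charpoly (Aop U z) :=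
    LinearMap.minpoly_dvd_charpoly _
  have h2 : (LinearMap.charpoly (Aop U z)).IsRoot μ := h1.dvd hdvd
  rw [hchar] at h2
  simp only [Polynomial.IsRoot, eval_pow, eval_sub, eval_X, eval_C] at h2
  exact sub_eq_zero.mp ((pow_eq_zero_iff (by norm_num : (2:ℕ) ≠ 0)).mp h2)

lemma exists_unit_eigenvector (U : E3 →L[ℂ] E3) (z : E3) (hz0 : z ≠ 0) (l1 : ℂ)
    (hchar : LinearMap.charpoly (Aop U z) = (X - C l1) ^ 2) :
    ∃ w : Theta z, ‖w‖ = 1 ∧ Aop U z w = l1 • w := by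
  have hrank := theta_rank z hz0
  have : Nontrivial (Theta z) :=
    Module.nontrivial_of_finrank_pos (R := ℂ) (by rw [hrank]; norm_num)
  obtain ⟨μ, hμ⟩ := Module.End.exists_eigenvalue (Aop U z : Module.End ℂ (Theta z))
  have hμl : μ = l1 := eig_eq U z l1 hchar μ hμ
  obtain ⟨w₀, hw₀⟩ := hμ.exists_hasEigenvector
  have hw₀ne : w₀ ≠ 0 := hw₀.right
  have hAw₀ : Aop U z w₀ = l1 • w₀ := by
    have := Module.End.mem_eigenspace_iff.mp hw₀.left
    rwa [hμl] at this
  have hn : ‖w₀‖ ≠ 0 := norm_ne_zero_iff.mpr hw₀ne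
  refine ⟨(↑(‖w₀‖⁻¹) : ℂ) • w₀, ?_, ?_⟩
  · rw [norm_smul]
    simp only [Complex.norm_real, norm_inv, norm_norm]
    exact inv_mul_cancel₀ hn
  · rw [map_smul, hAw₀, smul_comm]

lemma inner_self_one {z : E3} (w : Theta z) (hw : ‖w‖ = 1) : ⟪w, w⟫_ℂ = 1 := by
  rw [inner_self_eq_norm_sq_to_K, hw]; norm_num

/-- If `Aop U z` acts on two orthonormal vectors as multiplication by `l1`,
then `|l1| = 1`. -/
lemma abs_one_of_pair (U : E3 →L[ℂ] E3) (hU : U ∈ unitary (E3 →L[ℂ] E3))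
    (z : E3) (hz : ‖z‖ = 1) (l1 : ℂ) (w v : Theta z)
    (hw : ‖w‖ = 1) (hv : ‖v‖ = 1) (hwv : ⟪w, v⟫_ℂ = 0)
    (hAw : Aop U z w = l1 • w) (hAv : Aop U z v = l1 • v) :
    ‖l1‖ = 1 := by
  have kww := theta_key U hU z hz w w
  have kvv := theta_key U hU z hz v v
  have kwv := theta_key U hU z hz w v
  rw [inner_self_one w hw, hAw, inner_smul_left, inner_smul_right, inner_self_one w hw] at kww
  rw [inner_self_one v hv, hAv, inner_smul_left, inner_smul_right, inner_self_one v hv] at kvv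
  rw [hwv, hAw, hAv, inner_smul_left, inner_smul_right, hwv] at kwv
  set c1 := ⟪z, U ↑w⟫_ℂ
  set c2 := ⟪z, U ↑v⟫_ℂ
  have hzero : conj c1 * c2 = 0 := by
    rw [eq_comm] at kwv
    simpa using kwv
  have hcase : c1 = 0 ∨ c2 = 0 := by
    rcases mul_eq_zero.mp hzero with h | h
    · left; exact star_eq_zero.mp h
    · right; exact h
  have habs : conj l1 * l1 = 1 := by
    rcases hcase with h | h
    · rw [h, map_zero, zero_mul, zero_add, mul_one] at kww
      exact kww.symm
    · rw [h, mul_zero, zero_add, mul_one] at kvv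
      exact kvv.symm
  have hns : (Complex.normSq l1 : ℂ) = 1 := by
    rw [← Complex.mul_conj, mul_comm]
    exact habs
  have hns' : Complex.normSq l1 = 1 := by exact_mod_cast hns
  rw [Complex.norm_def, hns', Real.sqrt_one]

lemma conj_mul_self (a : ℂ) : conj a * a = (Complex.normSq a : ℂ) := by
  rw [mul_comm, Complex.mul_conj]

lemma basis_pair (z : E3) (hrank : Module.finrank ℂ (Theta z) = 2)
    (w v : Theta z) (hw : ‖w‖ = 1) (hv : ‖v‖ = 1) (hwv : ⟪w, v⟫_ℂ = 0) :
    ∃ b : Module.Basis (Fin 2) ℂ (Theta z), b 0 = w ∧ b 1 = v := by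
  have hvw : ⟪v, w⟫_ℂ = 0 := by rw [← inner_conj_symm, hwv, map_zero]
  have hon : Orthonormal ℂ (![w, v]) := by
    rw [orthonormal_iff_ite]
    intro i j
    fin_cases i <;> fin_cases j <;>
      simp [inner_self_one w hw, inner_self_one v hv, hwv, hvw,
        show ‖(w : E3)‖ = 1 from hw, show ‖(v : E3)‖ = 1 from hv]
  have hcard : Fintype.card (Fin 2) = Module.finrank ℂ (Theta z) := by simp [hrank]
  refine ⟨basisOfLinearIndependentOfCardEqFinrank hon.linearIndependent hcard, ?_, ?_⟩ <;>
    simp [coe_basisOfLinearIndependentOfCardEqFinrank]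

lemma abs_le_one (U : E3 →L[ℂ] E3) (hU : U ∈ unitary (E3 →L[ℂ] E3))
    (z : E3) (hz : ‖z‖ = 1) (l1 : ℂ)
    (hchar : LinearMap.charpoly (Aop U z) = (X - C l1) ^ 2) :
    ‖l1‖ ≤ 1 := by
  have hz0 : z ≠ 0 := by intro h; rw [h, norm_zero] at hz; norm_num at hz
  obtain ⟨w, hw, hAw⟩ := exists_unit_eigenvector U z hz0 l1 hchar
  have kww := theta_key U hU z hz w w
  rw [inner_self_one w hw, hAw, inner_smul_left, inner_smul_right, inner_self_one w hw,
    conj_mul_self, mul_one, conj_mul_self] at kww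
  have hre : (1:ℝ) = Complex.normSq ⟪z, U ↑w⟫_ℂ + Complex.normSq l1 := by
    exact_mod_cast kww
  have h1 : Complex.normSq l1 ≤ 1 := by
    have := Complex.normSq_nonneg ⟪z, U ↑w⟫_ℂ
    linarith
  rw [Complex.norm_def]
  calc Real.sqrt (Complex.normSq l1) ≤ Real.sqrt 1 := Real.sqrt_le_sqrt h1
  _ = 1 := Real.sqrt_one

lemma scalar_of_abs_one (U : E3 →L[ℂ] E3) (hU : U ∈ unitary (E3 →L[ℂ] E3))
    (z : E3) (hz : ‖z‖ = 1) (l1 : ℂ)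
    (hchar : LinearMap.charpoly (Aop U z) = (X - C l1) ^ 2)
    (habs : ‖l1‖ = 1) :
    Aop U z = l1 • LinearMap.id := by
  have hz0 : z ≠ 0 := by intro h; rw [h, norm_zero] at hz; norm_num at hz
  have hrank := theta_rank z hz0
  have hl1ns : Complex.normSq l1 = 1 := by
    have := congrArg (· ^ 2) habs
    simpa [Complex.sq_norm] using this
  have hl1ne : l1 ≠ 0 := by
    intro h; rw [h] at habs; simp at habs
  obtain ⟨w, hw, hAw⟩ := exists_unit_eigenvector U z hz0 l1 hchar
  -- the off-Θ component of U w vanishes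
  have kww := theta_key U hU z hz w w
  rw [inner_self_one w hw, hAw, inner_smul_left, inner_smul_right, inner_self_one w hw,
    conj_mul_self, mul_one, conj_mul_self, hl1ns] at kww
  have hcw : ⟪z, U ↑w⟫_ℂ = 0 := by
    have : (Complex.normSq ⟪z, U ↑w⟫_ℂ : ℂ) = 0 := by
      push_cast at kww
      linear_combination -kww
    have h2 : Complex.normSq ⟪z, U ↑w⟫_ℂ = 0 := by exact_mod_cast this
    exact Complex.normSq_eq_zero.mp h2
  obtain ⟨v, hv, hwv, hspan⟩ := exists_pair z hrank w hw
  have hvne : v ≠ 0 := by intro h; rw [h, norm_zero] at hv; norm_num at hv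
  -- A v is orthogonal to w
  have kwv := theta_key U hU z hz w v
  rw [hwv, hcw, map_zero, zero_mul, zero_add, hAw, inner_smul_left] at kwv
  have hwAv : ⟪w, Aop U z v⟫_ℂ = 0 := by
    rcases mul_eq_zero.mp kwv.symm with h | h
    · exact absurd (star_eq_zero.mp h) hl1ne
    · exact h
  obtain ⟨μ, hμ⟩ := Submodule.mem_span_singleton.mp (hspan _ hwAv)
  have hAv : Aop U z v = μ • v := hμ.symm
  have hμeig : Module.End.HasEigenvalue (Aop U z) μ :=
    Module.End.hasEigenvalue_of_hasEigenvector
      ⟨Module.End.mem_eigenspace_iff.mpr hAv, hvne⟩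
  have hμl : μ = l1 := eig_eq U z l1 hchar μ hμeig
  rw [hμl] at hAv
  obtain ⟨b, hb0, hb1⟩ := basis_pair z hrank w v hw hv hwv
  apply b.ext
  intro i
  fin_cases i <;> simp [hb0, hb1, hAw, hAv]

lemma scalar_of_not_defective (U : E3 →L[ℂ] E3)
    (z : E3) (l1 : ℂ)
    (hchar : LinearMap.charpoly (Aop U z) = (X - C l1) ^ 2)
    (hnd : ¬ Defective z (Aop U z)) :
    Aop U z = l1 • LinearMap.id := by
  rw [Defective, not_not] at hnd
  obtain ⟨b, hb⟩ := hnd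
  apply b.ext
  intro i
  obtain ⟨μ, hμ⟩ := hb i
  have hne : b i ≠ 0 := b.ne_zero i
  have hμeig : Module.End.HasEigenvalue (Aop U z) μ :=
    Module.End.hasEigenvalue_of_hasEigenvector
      ⟨Module.End.mem_eigenspace_iff.mpr hμ, hne⟩
  have := eig_eq U z l1 hchar μ hμeig
  rw [hμ, this]
  simp

lemma abs_one_of_scalar (U : E3 →L[ℂ] E3) (hU : U ∈ unitary (E3 →L[ℂ] E3))
    (z : E3) (hz : ‖z‖ = 1) (l1 : ℂ)
    (hsc : Aop U z = l1 • LinearMap.id) :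
    ‖l1‖ = 1 := by
  have hz0 : z ≠ 0 := by intro h; rw [h, norm_zero] at hz; norm_num at hz
  have hrank := theta_rank z hz0
  have : Nontrivial (Theta z) :=
    Module.nontrivial_of_finrank_pos (R := ℂ) (by rw [hrank]; norm_num)
  obtain ⟨w₀, hw₀ne⟩ := exists_ne (0 : Theta z)
  have hn : ‖w₀‖ ≠ 0 := norm_ne_zero_iff.mpr hw₀ne
  set w : Theta z := (↑(‖w₀‖⁻¹) : ℂ) • w₀ with hwdef
  have hw : ‖w‖ = 1 := by
    rw [hwdef, norm_smul]
    simp only [Complex.norm_real, norm_inv, norm_norm]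
    exact inv_mul_cancel₀ hn
  obtain ⟨v, hv, hwv, _⟩ := exists_pair z hrank w hw
  exact abs_one_of_pair U hU z hz l1 w v hw hv hwv
    (by rw [hsc]; simp) (by rw [hsc]; simp)

theorem stmt7 (U : E3 →L[ℂ] E3) (hU : U ∈ unitary (E3 →L[ℂ] E3))
    (z : E3) (hz : ‖z‖ = 1) (l1 : ℂ)
    (hchar : LinearMap.charpoly (Aop U z) = (X - C l1) ^ 2) :
    (Defective z (Aop U z) ↔ ‖l1‖ < 1) ∧
      (‖l1‖ = 1 → IsUnitaryOp z (Aop U z)) := by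
  have hz0 : z ≠ 0 := by intro h; rw [h, norm_zero] at hz; norm_num at hz
  have hrank := theta_rank z hz0
  have hle := abs_le_one U hU z hz l1 hchar
  have hnd_of_scalar : Aop U z = l1 • LinearMap.id → ¬ Defective z (Aop U z) := by
    intro hsc hD
    obtain ⟨w, hw, _⟩ := exists_unit_eigenvector U z hz0 l1 hchar
    obtain ⟨v, hv, hwv, _⟩ := exists_pair z hrank w hw
    obtain ⟨b, _, _⟩ := basis_pair z hrank w v hw hv hwv
    exact hD ⟨b, fun i => ⟨l1, by rw [hsc]; simp⟩⟩
  constructor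
  · constructor
    · intro hD
      rcases lt_or_eq_of_le hle with h | h
      · exact h
      · exact absurd hD (hnd_of_scalar (scalar_of_abs_one U hU z hz l1 hchar h))
    · intro hlt hcontra
      have hsc := scalar_of_not_defective U z l1 hchar (fun hD => hD hcontra)
      have := abs_one_of_scalar U hU z hz l1 hsc
      rw [this] at hlt
      exact lt_irrefl _ hlt
  · intro habs
    have hsc := scalar_of_abs_one U hU z hz l1 hchar habs
    have hl1ne : l1 ≠ 0 := by intro h; rw [h] at habs; simp at habs
    refine ⟨⟨LinearEquiv.smulOfNeZero ℂ (Theta z) l1 hl1ne, ?_⟩, ?_⟩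
    · intro x
      have h : (LinearEquiv.smulOfNeZero ℂ (Theta z) l1 hl1ne) x = l1 • x := rfl
      rw [h, norm_smul, habs, one_mul]
    · apply LinearMap.ext
      intro x
      have h : (LinearEquiv.smulOfNeZero ℂ (Theta z) l1 hl1ne) x = l1 • x := rfl
      rw [hsc]
      simp only [LinearMap.smul_apply, LinearMap.id_coe, id_eq]
      exact h
end
end

section
/- Let U be a 3×3 unitary matrix and let z, z̃ be unit vectors in ℂ³ with ⟨z, Uz⟩ = ⟨z̃, Uz̃⟩. Then there exists a unitary V on ℂ³ such that UV = VU and Vz = z̃. -/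
noncomputable section
open scoped InnerProductSpace

/-- In a finite-dimensional complex inner product space, any two vectors of
equal norm are related by a linear isometry equivalence. -/
lemma exists_isometry_map_eq {F : Type*} [NormedAddCommGroup F] [InnerProductSpace ℂ F]
    [FiniteDimensional ℂ F] (x y : F) (hxy : ‖x‖ = ‖y‖) :
    ∃ g : F ≃ₗᵢ[ℂ] F, g x = y := by
  by_cases hx : x = 0
  · refine ⟨LinearIsometryEquiv.refl ℂ F, ?_⟩
    have : y = 0 := by
      have := hxy; rw [hx, norm_zero] at this; exact (norm_eq_zero.mp this.symm)
    simp [hx, this]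
  · have hy : y ≠ 0 := by
      intro hy; rw [hy, norm_zero, norm_eq_zero] at hxy; exact hx hxy
    have hnt : Nontrivial F := ⟨x, 0, hx⟩
    set n := Module.finrank ℂ F with hn
    have hpos : 0 < n := Module.finrank_pos
    set i0 : Fin n := ⟨0, hpos⟩
    have hcard : Module.finrank ℂ F = Fintype.card (Fin n) := by simp [hn]
    have hxn : ‖(‖x‖:ℂ)⁻¹ • x‖ = 1 := by
      rw [norm_smul]
      simp [norm_inv]
      rw [inv_mul_cancel₀ (norm_ne_zero_iff.mpr hx)]
    have hyn : ‖(‖y‖:ℂ)⁻¹ • y‖ = 1 := by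
      rw [norm_smul]
      simp [norm_inv]
      rw [inv_mul_cancel₀ (norm_ne_zero_iff.mpr hy)]
    have hox : Orthonormal ℂ (({i0} : Set (Fin n)).restrict (fun _ => (‖x‖:ℂ)⁻¹ • x)) := by
      constructor
      · intro i; exact hxn
      · intro i j hij; exact absurd (Subsingleton.elim i j) hij
    have hoy : Orthonormal ℂ (({i0} : Set (Fin n)).restrict (fun _ => (‖y‖:ℂ)⁻¹ • y)) := by
      constructor
      · intro i; exact hyn
      · intro i j hij; exact absurd (Subsingleton.elim i j) hij
    obtain ⟨bx, hbx⟩ := hox.exists_orthonormalBasis_extension_of_card_eq hcard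
    obtain ⟨by', hby⟩ := hoy.exists_orthonormalBasis_extension_of_card_eq hcard
    refine ⟨bx.repr.trans by'.repr.symm, ?_⟩
    have h1 : bx i0 = (‖x‖:ℂ)⁻¹ • x := hbx i0 rfl
    have h2 : by' i0 = (‖y‖:ℂ)⁻¹ • y := hby i0 rfl
    have hx' : x = (‖x‖:ℂ) • bx i0 := by
      rw [h1, smul_smul, mul_inv_cancel₀, one_smul]
      exact_mod_cast norm_ne_zero_iff.mpr hx
    have hg : (bx.repr.trans by'.repr.symm) (bx i0) = by' i0 := by
      simp [LinearIsometryEquiv.trans_apply, bx.repr_self, by'.repr_symm_single]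
    rw [hx', map_smul, hg, h2, smul_smul, hxy, mul_inv_cancel₀, one_smul]
    exact_mod_cast norm_ne_zero_iff.mpr hy

/-- At most three distinct points on the unit circle are affinely independent over ℝ:
real-coefficient relations summing to zero must vanish. -/
lemma key_unique (s : Finset ℂ) (hcard : s.card ≤ 3) (hs : ∀ μ ∈ s, ‖μ‖ = 1)
    (r : ℂ → ℂ) (hreal : ∀ μ ∈ s, (starRingEnd ℂ) (r μ) = r μ)
    (h0 : ∑ μ ∈ s, r μ = 0) (h1 : ∑ μ ∈ s, r μ * μ = 0) :
    ∀ μ ∈ s, r μ = 0 := by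
  have hconj : ∀ μ ∈ s, (starRingEnd ℂ) μ = μ⁻¹ := by
    intro μ hμ
    have hm : μ * (starRingEnd ℂ) μ = 1 := by
      rw [Complex.mul_conj]
      norm_cast
      rw [Complex.normSq_eq_norm_sq, hs μ hμ, one_pow]
    exact (inv_eq_of_mul_eq_one_right hm).symm
  have hne : ∀ μ ∈ s, μ ≠ 0 := by
    intro μ hμ h0'
    have := hs μ hμ; rw [h0'] at this; simp at this
  have h2 : ∑ μ ∈ s, r μ * μ⁻¹ = 0 := by
    have hcg := congrArg (starRingEnd ℂ) h1
    rw [map_sum, map_zero] at hcg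
    rw [← hcg]
    apply Finset.sum_congr rfl
    intro μ hμ
    rw [map_mul, hreal μ hμ, hconj μ hμ]
  interval_cases hc : s.card
  · intro μ hμ; simp [Finset.card_eq_zero.mp hc] at hμ
  · obtain ⟨a, rfl⟩ := Finset.card_eq_one.mp hc
    simp only [Finset.sum_singleton] at h0
    intro μ hμ
    simp only [Finset.mem_singleton] at hμ
    subst hμ; exact h0
  · obtain ⟨a, b, hab, rfl⟩ := Finset.card_eq_two.mp hc
    rw [Finset.sum_pair hab] at h0
    rw [Finset.sum_pair hab] at h1
    have hra : r a = 0 := by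
      have h3 : r a * (a - b) = 0 := by linear_combination h1 - b * h0
      rcases mul_eq_zero.mp h3 with hh | hh
      · exact hh
      · exact absurd (by linear_combination hh) hab
    intro μ hμ
    simp only [Finset.mem_insert, Finset.mem_singleton] at hμ
    rcases hμ with rfl | rfl
    · exact hra
    · linear_combination h0 - hra
  · obtain ⟨a, b, c, hab, hac, hbc, rfl⟩ := Finset.card_eq_three.mp hc
    have hmema : a ∈ ({a, b, c} : Finset ℂ) := by simp
    have hmemb : b ∈ ({a, b, c} : Finset ℂ) := by simp
    have hmemc : c ∈ ({a, b, c} : Finset ℂ) := by simp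
    have ha0 := hne a hmema; have hb0 := hne b hmemb; have hc0 := hne c hmemc
    have esum : ∀ f : ℂ → ℂ, ∑ μ ∈ ({a, b, c} : Finset ℂ), f μ = f a + f b + f c := by
      intro f
      rw [Finset.sum_insert (by simp [hab, hac]), Finset.sum_pair hbc, add_assoc]
    rw [esum] at h0
    rw [esum] at h1
    rw [esum] at h2
    -- clear denominators in h2
    have h3 : r a * b * c + r b * a * c + r c * a * b = 0 := by
      have hcg := congrArg (fun t => t * (a * b * c)) h2
      simp only [zero_mul] at hcg
      field_simp at hcg
      linear_combination hcg
    have hP : r a * (a - c) + r b * (b - c) = 0 := by linear_combination h1 - c * h0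
    have hQ : r a * b * (c - a) + r b * a * (c - b) = 0 := by
      linear_combination h3 - (a * b) * h0
    have hrb : r b * ((b - c) * (b - a)) = 0 := by linear_combination b * hP + hQ
    have hb' : r b = 0 := by
      rcases mul_eq_zero.mp hrb with hh | hh
      · exact hh
      · rcases mul_eq_zero.mp hh with hh' | hh'
        · exact absurd (by linear_combination hh') hbc
        · exact absurd (by linear_combination -hh') hab
    have ha' : r a = 0 := by
      have hra2 : r a * (a - c) = 0 := by linear_combination hP - (b - c) * hb'
      rcases mul_eq_zero.mp hra2 with hh | hh
      · exact hh
      · exact absurd (by linear_combination hh) hac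
    intro μ hμ
    simp only [Finset.mem_insert, Finset.mem_singleton] at hμ
    rcases hμ with rfl | rfl | rfl
    · exact ha'
    · exact hb'
    · linear_combination h0 - ha' - hb'

section Unitary

variable {E : Type*} [NormedAddCommGroup E] [InnerProductSpace ℂ E] [FiniteDimensional ℂ E]

open Module.End ContinuousLinearMap

lemma unitary_mul_adjoint_comm (U : E →L[ℂ] E) (hU : U ∈ unitary (E →L[ℂ] E)) :
    U * adjoint U = adjoint U * U := by
  have h1 := hU.1
  have h2 := hU.2
  rw [star_eq_adjoint] at h1 h2
  rw [h1, h2]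

lemma unitary_iSup_eigenspace_eq_top (U : E →L[ℂ] E) (hU : U ∈ unitary (E →L[ℂ] E)) :
    ⨆ μ : ℂ, eigenspace (U : E →ₗ[ℂ] E) μ = ⊤ := by
  set A : E →ₗ[ℂ] E := (U : E →ₗ[ℂ] E) + (adjoint U : E →ₗ[ℂ] E) with hA
  set B : E →ₗ[ℂ] E := Complex.I • ((U : E →ₗ[ℂ] E) - (adjoint U : E →ₗ[ℂ] E)) with hB
  have hAsym : A.IsSymmetric := by
    intro x y
    simp only [hA, LinearMap.add_apply, ContinuousLinearMap.coe_coe,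
      inner_add_left, inner_add_right]
    rw [adjoint_inner_left, adjoint_inner_right]
    ring
  have hBsym : B.IsSymmetric := by
    intro x y
    simp only [hB, LinearMap.smul_apply, LinearMap.sub_apply, ContinuousLinearMap.coe_coe,
      inner_smul_left, inner_smul_right, inner_sub_left, inner_sub_right]
    rw [adjoint_inner_left, adjoint_inner_right, Complex.conj_I]
    ring
  have hcomm : Commute A B := by
    have hc : U * adjoint U = adjoint U * U := unitary_mul_adjoint_comm U hU
    have hc' : (U : E →ₗ[ℂ] E) ∘ₗ (adjoint U : E →ₗ[ℂ] E)
        = (adjoint U : E →ₗ[ℂ] E) ∘ₗ (U : E →ₗ[ℂ] E) := by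
      ext x
      have := congrArg (fun T => T x) hc
      simpa using this
    show A ∘ₗ B = B ∘ₗ A
    simp only [hA, hB]
    ext x
    have hx := congrArg (fun T => T x) hc'
    simp only [LinearMap.comp_apply, LinearMap.add_apply, LinearMap.sub_apply,
      LinearMap.smul_apply, map_add, map_sub, map_smul] at hx ⊢
    rw [show ((U : E →ₗ[ℂ] E) ((adjoint U : E →ₗ[ℂ] E) x)) =
      ((adjoint U : E →ₗ[ℂ] E) ((U : E →ₗ[ℂ] E) x)) from hx]
    module
  have htop := LinearMap.IsSymmetric.iSup_iSup_eigenspace_inf_eigenspace_eq_top_of_commute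
    hAsym hBsym hcomm
  rw [← top_le_iff, ← htop]
  refine iSup_le fun α => iSup_le fun γ => ?_
  refine le_iSup_of_le ((α - Complex.I * γ) / 2) ?_
  intro x hx
  rw [Submodule.mem_inf] at hx
  obtain ⟨hxA, hxB⟩ := hx
  rw [mem_eigenspace_iff] at hxA hxB
  rw [mem_eigenspace_iff]
  have hA' : (U : E →ₗ[ℂ] E) x + (adjoint U : E →ₗ[ℂ] E) x = α • x := hxA
  have hB' : Complex.I • ((U : E →ₗ[ℂ] E) x - (adjoint U : E →ₗ[ℂ] E) x) = γ • x := hxB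
  have hB'' : (U : E →ₗ[ℂ] E) x - (adjoint U : E →ₗ[ℂ] E) x = (-Complex.I * γ) • x := by
    have := congrArg (fun w => (-Complex.I) • w) hB'
    simp only [smul_smul] at this
    rw [show (-Complex.I) * Complex.I = 1 by simp [Complex.I_mul_I], one_smul] at this
    rw [this, neg_mul, neg_smul]
  have : (2 : ℂ) • (U : E →ₗ[ℂ] E) x = (α + (-Complex.I * γ)) • x := by
    rw [add_smul, ← hA', ← hB'']
    module
  have h2 := congrArg (fun w => (2 : ℂ)⁻¹ • w) this
  simp only [smul_smul] at h2
  norm_num at h2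
  show U x = ((α - Complex.I * γ) / 2) • x
  rw [h2]
  congr 1
  ring

lemma unitary_eigenvalue_norm_one (U : E →L[ℂ] E) (hU : U ∈ unitary (E →L[ℂ] E))
    {μ : ℂ} {x : E} (hx : x ∈ eigenspace (U : E →ₗ[ℂ] E) μ) (hx0 : x ≠ 0) : ‖μ‖ = 1 := by
  rw [mem_eigenspace_iff] at hx
  have hnorm : ‖U x‖ = ‖x‖ := by
    have h1 := hU.1
    rw [star_eq_adjoint] at h1
    have : ⟪U x, U x⟫_ℂ = ⟪x, x⟫_ℂ := by
      rw [← adjoint_inner_left]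
      have := congrArg (fun T => T x) h1
      simp only [ContinuousLinearMap.mul_apply, ContinuousLinearMap.one_apply] at this
      rw [this]
    rw [inner_self_eq_norm_sq_to_K, inner_self_eq_norm_sq_to_K] at this
    have hn : ‖U x‖ ^ 2 = ‖x‖ ^ 2 := by exact_mod_cast this
    nlinarith [norm_nonneg (U x), norm_nonneg x]
  rw [show U x = (U : E →ₗ[ℂ] E) x from rfl, hx, norm_smul] at hnorm
  have hxn : ‖x‖ ≠ 0 := norm_ne_zero_iff.mpr hx0
  field_simp at hnorm
  exact hnorm

lemma unitary_eigenspace_orthogonal (U : E →L[ℂ] E) (hU : U ∈ unitary (E →L[ℂ] E))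
    {μ ν : ℂ} (hμν : μ ≠ ν) {x y : E} (hx : x ∈ eigenspace (U : E →ₗ[ℂ] E) μ)
    (hy : y ∈ eigenspace (U : E →ₗ[ℂ] E) ν) : ⟪x, y⟫_ℂ = 0 := by
  by_cases hx0 : x = 0
  · simp [hx0]
  by_cases hy0 : y = 0
  · simp [hy0]
  have hμ1 := unitary_eigenvalue_norm_one U hU hx hx0
  have hinner : ⟪U x, U y⟫_ℂ = ⟪x, y⟫_ℂ := by
    have h1 := hU.1
    rw [star_eq_adjoint] at h1
    rw [← adjoint_inner_left]
    have hxx := congrArg (fun T => T x) h1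
    simp only [ContinuousLinearMap.mul_apply, ContinuousLinearMap.one_apply] at hxx
    rw [hxx]
  rw [mem_eigenspace_iff] at hx hy
  rw [show U x = (U : E →ₗ[ℂ] E) x from rfl, show U y = (U : E →ₗ[ℂ] E) y from rfl,
    hx, hy, inner_smul_left, inner_smul_right] at hinner
  have hμ0 : μ ≠ 0 := by
    intro hμ0; rw [hμ0] at hμ1; simp at hμ1
  have hconj : (starRingEnd ℂ) μ = μ⁻¹ := by
    have hm : μ * (starRingEnd ℂ) μ = 1 := by
      rw [Complex.mul_conj]
      norm_cast
      rw [Complex.normSq_eq_norm_sq, hμ1, one_pow]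
    exact (inv_eq_of_mul_eq_one_right hm).symm
  rw [hconj] at hinner
  by_contra hxy
  have hfac : (μ⁻¹ * ν - 1) * ⟪x, y⟫_ℂ = 0 := by linear_combination hinner
  rcases mul_eq_zero.mp hfac with hh | hh
  · have : μ⁻¹ * ν = 1 := by linear_combination hh
    rw [inv_mul_eq_one₀ hμ0] at this
    exact hμν this
  · exact hxy hh

end Unitary
section Unitary2

variable {E : Type*} [NormedAddCommGroup E] [InnerProductSpace ℂ E] [FiniteDimensional ℂ E]

open Module.End ContinuousLinearMap Submodule

lemma unitary_exists_eigenvalue_finset (U : E →L[ℂ] E) (hU : U ∈ unitary (E →L[ℂ] E)) :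
    ∃ Λ : Finset ℂ, (∀ μ : ℂ, μ ∈ Λ ↔ eigenspace (U : E →ₗ[ℂ] E) μ ≠ ⊥) ∧
      Λ.card ≤ Module.finrank ℂ E := by
  classical
  set S : Set ℂ := {μ : ℂ | eigenspace (U : E →ₗ[ℂ] E) μ ≠ ⊥} with hS
  have hv : ∀ μ : S, ∃ v : E, v ∈ eigenspace (U : E →ₗ[ℂ] E) (μ : ℂ) ∧ ‖v‖ = 1 := by
    rintro ⟨μ, hμ⟩
    obtain ⟨x, hx, hx0⟩ := Submodule.exists_mem_ne_zero_of_ne_bot hμ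
    refine ⟨(‖x‖ : ℂ)⁻¹ • x, Submodule.smul_mem _ _ hx, ?_⟩
    rw [norm_smul]
    simp only [norm_inv, Complex.norm_real, norm_norm]
    rw [inv_mul_cancel₀ (norm_ne_zero_iff.mpr hx0)]
  choose v hvmem hvnorm using hv
  have hvne : ∀ μ : S, v μ ≠ 0 := by
    intro μ h0
    have := hvnorm μ; rw [h0] at this; simp at this
  have hortho : Orthonormal ℂ v := by
    constructor
    · exact hvnorm
    · intro μ ν hμν
      exact unitary_eigenspace_orthogonal U hU (fun hc => hμν (Subtype.ext hc))
        (hvmem μ) (hvmem ν)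
  have hfin : Finite S := hortho.linearIndependent.finite
  have hSfin : S.Finite := Set.finite_coe_iff.mp hfin
  refine ⟨hSfin.toFinset, ?_, ?_⟩
  · intro μ; rw [Set.Finite.mem_toFinset]; exact Iff.rfl
  · have : Fintype S := hSfin.fintype
    rw [Set.Finite.card_toFinset]
    exact hortho.linearIndependent.fintype_card_le_finrank

lemma unitary_sum_proj (U : E →L[ℂ] E) (hU : U ∈ unitary (E →L[ℂ] E))
    (Λ : Finset ℂ) (hΛ : ∀ μ : ℂ, μ ∈ Λ ↔ eigenspace (U : E →ₗ[ℂ] E) μ ≠ ⊥) (x : E) :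
    ∑ μ ∈ Λ, ((eigenspace (U : E →ₗ[ℂ] E) μ).subtypeL ∘L
      orthogonalProjection (eigenspace (U : E →ₗ[ℂ] E) μ)) x = x := by
  classical
  set W : ℂ → Submodule ℂ E := fun μ => eigenspace (U : E →ₗ[ℂ] E) μ with hW
  have hx : x ∈ ⨆ μ : ℂ, W μ := by
    rw [unitary_iSup_eigenspace_eq_top U hU]; trivial
  refine Submodule.iSup_induction (motive := fun y =>
      ∑ μ ∈ Λ, ((W μ).subtypeL ∘L orthogonalProjection (W μ)) y = y) W hx ?_ ?_ ?_
  · intro ν y hy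
    by_cases hν : ν ∈ Λ
    · rw [Finset.sum_eq_single_of_mem ν hν]
      · simp only [ContinuousLinearMap.comp_apply, Submodule.subtypeL_apply]
        exact congrArg Subtype.val (Submodule.orthogonalProjectionOnto_mem_subspace_eq_self (K := W ν) ⟨y, hy⟩)
      · intro μ _ hμν
        simp only [ContinuousLinearMap.comp_apply, Submodule.subtypeL_apply]
        rw [orthogonalProjection_mem_subspace_orthogonalComplement_eq_zero, Submodule.coe_zero]
        rw [Submodule.mem_orthogonal]
        intro u hu
        exact unitary_eigenspace_orthogonal U hU hμν hu hy
    · have hbot : W ν = ⊥ := by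
        by_contra hb; exact hν ((hΛ ν).mpr hb)
      rw [hbot, Submodule.mem_bot] at hy
      subst hy
      simp
  · simp
  · intro y z hy hz
    simp only [map_add]
    rw [Finset.sum_add_distrib, hy, hz]

end Unitary2


lemma isometry_coe_inner {E : Type*} [NormedAddCommGroup E] [InnerProductSpace ℂ E]
    {K : Submodule ℂ E} (g : K ≃ₗᵢ[ℂ] K) (a b : K) :
    ⟪((g a : K) : E), ((g b : K) : E)⟫_ℂ = ⟪(a : E), (b : E)⟫_ℂ := by
  rw [← Submodule.coe_inner, ← Submodule.coe_inner]
  exact g.inner_map_map a b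

set_option maxHeartbeats 1000000 in
open Module.End ContinuousLinearMap Submodule in
theorem stmt10 (U : E3 →L[ℂ] E3) (hU : U ∈ unitary (E3 →L[ℂ] E3))
    (z zt : E3) (hz : ‖z‖ = 1) (hzt : ‖zt‖ = 1)
    (h : ⟪z, U z⟫_ℂ = ⟪zt, U zt⟫_ℂ) :
    ∃ V : E3 →L[ℂ] E3, V ∈ unitary (E3 →L[ℂ] E3) ∧ U * V = V * U ∧ V z = zt := by
  classical
  obtain ⟨Λ, hΛ, hΛcard⟩ := unitary_exists_eigenvalue_finset U hU
  rw [finrank_euclideanSpace_fin] at hΛcard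
  set W : ℂ → Submodule ℂ E3 := fun μ => eigenspace (U : E3 →ₗ[ℂ] E3) μ with hW
  set P : (μ : ℂ) → E3 →L[ℂ] (W μ) := fun μ => orthogonalProjection (W μ) with hP
  set Q : ℂ → (E3 →L[ℂ] E3) := fun μ => (W μ).subtypeL ∘L P μ with hQ
  have hQapp : ∀ μ x, Q μ x = ((P μ x : E3)) := fun μ x => rfl
  have hdec : ∀ x : E3, ∑ μ ∈ Λ, Q μ x = x := unitary_sum_proj U hU Λ hΛ
  have hQmem : ∀ μ x, Q μ x ∈ W μ := fun μ x => (P μ x).2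
  have hWortho : ∀ {μ ν : ℂ}, μ ≠ ν → ∀ {a b : E3}, a ∈ W μ → b ∈ W ν → ⟪a, b⟫_ℂ = 0 :=
    fun {μ ν} hμν {a b} ha hb => unitary_eigenspace_orthogonal U hU hμν ha hb
  have hQzero : ∀ {μ ν : ℂ}, μ ≠ ν → ∀ {x : E3}, x ∈ W ν → Q μ x = 0 := by
    intro μ ν hμν x hx
    rw [hQapp]
    rw [orthogonalProjection_mem_subspace_orthogonalComplement_eq_zero, Submodule.coe_zero]
    rw [Submodule.mem_orthogonal]
    intro u hu
    exact hWortho hμν hu hx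
  have hQid : ∀ {μ : ℂ} {x : E3}, x ∈ W μ → Q μ x = x := by
    intro μ x hx
    rw [hQapp]; exact congrArg Subtype.val (Submodule.orthogonalProjectionOnto_mem_subspace_eq_self (K := W μ) ⟨x, hx⟩)
  -- inner product expansion
  have hinner : ∀ x y : E3, ⟪x, y⟫_ℂ = ∑ μ ∈ Λ, ⟪Q μ x, Q μ y⟫_ℂ := by
    intro x y
    conv_lhs => rw [← hdec x, ← hdec y]
    rw [sum_inner]
    apply Finset.sum_congr rfl
    intro μ hμ
    rw [inner_sum, Finset.sum_eq_single_of_mem μ hμ]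
    intro ν _ hνμ
    exact hWortho (Ne.symm hνμ) (hQmem μ x) (hQmem ν y)
  -- action of U in terms of projections
  have hWact : ∀ (μ : ℂ) (w : E3), w ∈ W μ → U w = μ • w := by
    intro μ w hw
    rw [hW] at hw
    rw [mem_eigenspace_iff] at hw
    exact hw
  have hUQ : ∀ μ (x : E3), U (Q μ x) = μ • Q μ x := fun μ x => hWact μ _ (hQmem μ x)
  have hQU : ∀ μ (x : E3), Q μ (U x) = μ • Q μ x := by
    intro μ x
    conv_lhs => rw [← hdec x]
    rw [map_sum, map_sum]
    by_cases hμ : μ ∈ Λ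
    · rw [Finset.sum_eq_single_of_mem μ hμ]
      · rw [hUQ, map_smul, hQid (hQmem μ x)]
      · intro ν _ hνμ
        rw [hUQ, map_smul, hQzero (Ne.symm hνμ) (hQmem ν x), smul_zero]
    · have hbot : W μ = ⊥ := by
        by_contra hb; exact hμ ((hΛ μ).mpr hb)
      have hz0 : ∀ y : E3, Q μ y = 0 := by
        intro y
        have := hQmem μ y
        rw [hbot, Submodule.mem_bot] at this
        exact this
      rw [hz0, smul_zero]
      apply Finset.sum_eq_zero
      intro ν _
      rw [hUQ, map_smul, hz0, smul_zero]
  have hexp : ∀ x : E3, ⟪x, U x⟫_ℂ = ∑ μ ∈ Λ, μ * (‖Q μ x‖ : ℂ) ^ 2 := by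
    intro x
    rw [hinner x (U x)]
    apply Finset.sum_congr rfl
    intro μ _
    rw [hQU, inner_smul_right, inner_self_eq_norm_sq_to_K]
    norm_num
  -- norm equality of projections
  have hone : ∀ x : E3, ‖x‖ = 1 → (1 : ℂ) = ∑ μ ∈ Λ, (‖Q μ x‖ : ℂ) ^ 2 := by
    intro x hx
    have := hinner x x
    rw [inner_self_eq_norm_sq_to_K, hx] at this
    simpa using this.trans (Finset.sum_congr rfl fun μ _ => inner_self_eq_norm_sq_to_K _)
  have hkey : ∀ μ ∈ Λ, (‖Q μ z‖ : ℂ) ^ 2 = (‖Q μ zt‖ : ℂ) ^ 2 := by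
    set r : ℂ → ℂ := fun μ => (‖Q μ z‖ : ℂ) ^ 2 - (‖Q μ zt‖ : ℂ) ^ 2 with hr
    have h0 : ∑ μ ∈ Λ, r μ = 0 := by
      rw [hr]
      simp only [Finset.sum_sub_distrib]
      rw [← hone z hz, ← hone zt hzt, sub_self]
    have h1 : ∑ μ ∈ Λ, r μ * μ = 0 := by
      have hzz := hexp z
      have hzzt := hexp zt
      rw [h] at hzz
      have := hzz.symm.trans hzzt
      rw [hr]
      simp only [sub_mul]
      rw [Finset.sum_sub_distrib]
      have e1 : ∑ μ ∈ Λ, (‖Q μ z‖ : ℂ) ^ 2 * μ = ∑ μ ∈ Λ, μ * (‖Q μ z‖ : ℂ) ^ 2 :=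
        Finset.sum_congr rfl fun μ _ => mul_comm _ _
      have e2 : ∑ μ ∈ Λ, (‖Q μ zt‖ : ℂ) ^ 2 * μ = ∑ μ ∈ Λ, μ * (‖Q μ zt‖ : ℂ) ^ 2 :=
        Finset.sum_congr rfl fun μ _ => mul_comm _ _
      rw [e1, e2, this, sub_self]
    have hnormone : ∀ μ ∈ Λ, ‖μ‖ = 1 := by
      intro μ hμ
      obtain ⟨x, hx, hx0⟩ := Submodule.exists_mem_ne_zero_of_ne_bot ((hΛ μ).mp hμ)
      exact unitary_eigenvalue_norm_one U hU hx hx0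
    have hreal : ∀ μ ∈ Λ, (starRingEnd ℂ) (r μ) = r μ := by
      intro μ _
      rw [hr]
      simp only [map_sub, map_pow, Complex.conj_ofReal]
    have := key_unique Λ hΛcard hnormone r hreal h0 h1
    intro μ hμ
    have hrz := this μ hμ
    rw [hr] at hrz
    linear_combination hrz
  have hnorm : ∀ μ : ℂ, ‖P μ z‖ = ‖P μ zt‖ := by
    intro μ
    by_cases hμ : μ ∈ Λ
    · have := hkey μ hμ
      have h2 : (‖Q μ z‖ : ℝ) ^ 2 = (‖Q μ zt‖ : ℝ) ^ 2 := by exact_mod_cast this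
      have h3 : ‖Q μ z‖ = ‖Q μ zt‖ := by
        nlinarith [norm_nonneg (Q μ z), norm_nonneg (Q μ zt)]
      rw [hQapp, hQapp] at h3
      rw [show ‖P μ z‖ = ‖(P μ z : E3)‖ from rfl, show ‖P μ zt‖ = ‖(P μ zt : E3)‖ from rfl, h3]
    · have hbot : W μ = ⊥ := by
        by_contra hb; exact hμ ((hΛ μ).mpr hb)
      have hpz : ∀ y : E3, P μ y = 0 := by
        intro y
        have hm := hQmem μ y
        rw [hbot] at hm
        have h0 : Q μ y = 0 := (Submodule.mem_bot ℂ).mp hm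
        apply Subtype.ext
        rw [Submodule.coe_zero, ← hQapp μ y]
        exact h0
      rw [hpz z, hpz zt]
  -- construct blockwise isometries
  have hgex : ∀ μ : ℂ, ∃ g : (W μ) ≃ₗᵢ[ℂ] (W μ), g (P μ z) = P μ zt := fun μ =>
    exists_isometry_map_eq (P μ z) (P μ zt) (hnorm μ)
  choose g hg using hgex
  set V : E3 →L[ℂ] E3 := ∑ μ ∈ Λ, ((W μ).subtypeL ∘L
    (g μ).toLinearIsometry.toContinuousLinearMap ∘L P μ) with hV
  have hVapp : ∀ x : E3, V x = ∑ μ ∈ Λ, ((g μ (P μ x) : E3)) := by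
    intro x
    rw [hV, ContinuousLinearMap.sum_apply]
    exact Finset.sum_congr rfl fun μ _ => rfl
  have hVmemterm : ∀ μ (x : E3), ((g μ (P μ x) : E3)) ∈ W μ := fun μ x => (g μ (P μ x)).2
  -- V z = zt
  have hVz : V z = zt := by
    rw [hVapp]
    have : ∀ μ ∈ Λ, ((g μ (P μ z) : E3)) = Q μ zt := by
      intro μ _
      rw [hg μ, hQapp]
    rw [Finset.sum_congr rfl this, hdec]
  -- V preserves inner products
  have hVinner : ∀ x y : E3, ⟪V x, V y⟫_ℂ = ⟪x, y⟫_ℂ := by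
    intro x y
    rw [hVapp, hVapp, sum_inner]
    rw [hinner x y]
    apply Finset.sum_congr rfl
    intro μ hμ
    rw [inner_sum, Finset.sum_eq_single_of_mem μ hμ]
    · rw [hQapp μ x, hQapp μ y]
      exact isometry_coe_inner (g μ) (P μ x) (P μ y)
    · intro ν _ hνμ
      exact hWortho (Ne.symm hνμ) (hVmemterm μ x) (hVmemterm ν y)
  -- adjoint facts
  have hadj1 : adjoint V * V = 1 := by
    refine ContinuousLinearMap.ext fun x => ?_
    rw [ContinuousLinearMap.mul_apply, ContinuousLinearMap.one_apply]
    apply ext_inner_left ℂ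
    intro v
    rw [adjoint_inner_right, hVinner]
  have hinj : Function.Injective V := by
    intro a b hab
    have h1 := congrArg (fun T => T a) hadj1
    have h2 := congrArg (fun T => T b) hadj1
    simp only [ContinuousLinearMap.mul_apply, ContinuousLinearMap.one_apply] at h1 h2
    rw [← h1, ← h2, hab]
  have hsurj : Function.Surjective V := by
    have := (LinearMap.injective_iff_surjective (f := (V : E3 →ₗ[ℂ] E3))).mp hinj
    exact this
  have hadj2 : V * adjoint V = 1 := by
    refine ContinuousLinearMap.ext fun y => ?_
    obtain ⟨x, rfl⟩ := hsurj y
    rw [ContinuousLinearMap.mul_apply, ContinuousLinearMap.one_apply]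
    have h1 := congrArg (fun T => T x) hadj1
    simp only [ContinuousLinearMap.mul_apply, ContinuousLinearMap.one_apply] at h1
    rw [h1]
  -- commutation
  have hcomm : U * V = V * U := by
    refine ContinuousLinearMap.ext fun x => ?_
    rw [ContinuousLinearMap.mul_apply, ContinuousLinearMap.mul_apply, hVapp, map_sum, hVapp]
    apply Finset.sum_congr rfl
    intro μ _
    have hterm : U ((g μ (P μ x) : E3)) = μ • ((g μ (P μ x) : E3)) :=
      hWact μ _ (hVmemterm μ x)
    have hPU : P μ (U x) = μ • P μ x := by
      have := hQU μ x
      rw [hQapp, hQapp] at this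
      exact Subtype.ext (by simpa using this)
    rw [hterm, hPU, map_smul, Submodule.coe_smul]
  refine ⟨V, ?_, hcomm, hVz⟩
  rw [Unitary.mem_iff, star_eq_adjoint]
  exact ⟨hadj1, hadj2⟩
end
end

section
/- There exist a unitary operator Ũ on ℂ⁴ and unit vectors z₁, z₂ ∈ ℂ⁴ such that ⟨z₁, Ũz₁⟩ = ⟨z₂, Ũz₂⟩ but no unitary V commuting with Ũ satisfies Vz₁ = z₂. (Concretely, take Ũ = diag(1, -1, i, -i), z₁ = (1,1,0,0)/√2, z₂ = (0,0,1,1)/√2.) -/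
noncomputable section
open Matrix

def Ut : Matrix (Fin 4) (Fin 4) ℂ := Matrix.diagonal ![1, -1, Complex.I, -Complex.I]

noncomputable def z1 : Fin 4 → ℂ := ((1 / Real.sqrt 2 : ℝ) : ℂ) • ![1, 1, 0, 0]

noncomputable def z2 : Fin 4 → ℂ := ((1 / Real.sqrt 2 : ℝ) : ℂ) • ![0, 0, 1, 1]

theorem stmt12 :
    Ut ∈ Matrix.unitaryGroup (Fin 4) ℂ ∧
    star z1 ⬝ᵥ z1 = 1 ∧ star z2 ⬝ᵥ z2 = 1 ∧
    star z1 ⬝ᵥ Ut.mulVec z1 = 0 ∧ star z2 ⬝ᵥ Ut.mulVec z2 = 0 ∧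
    ¬ ∃ V : Matrix (Fin 4) (Fin 4) ℂ, V ∈ Matrix.unitaryGroup (Fin 4) ℂ ∧
        V * Ut = Ut * V ∧ V.mulVec z1 = z2 := by
  have hc : ((Real.sqrt 2 : ℝ) : ℂ)⁻¹ * ((Real.sqrt 2 : ℝ) : ℂ)⁻¹ = 1/2 := by
    rw [← mul_inv, ← Complex.ofReal_mul, Real.mul_self_sqrt (by norm_num)]
    norm_num
  have hs : ((Real.sqrt 2 : ℝ) : ℂ) ≠ 0 := by
    set_option linter.unnecessarySimpa false in simpa using Real.sqrt_ne_zero'.2 (by norm_num : (0:ℝ) < 2)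
  refine ⟨?_, ?_, ?_, ?_, ?_, ?_⟩
  · constructor
    · ext i j
      fin_cases i <;> fin_cases j <;>
        simp [Ut, Matrix.mul_apply, Fin.sum_univ_four, Matrix.diagonal, Complex.ext_iff]
    · ext i j
      fin_cases i <;> fin_cases j <;>
        simp [Ut, Matrix.mul_apply, Fin.sum_univ_four, Matrix.diagonal, Complex.ext_iff]
  · simp [z1, dotProduct, Fin.sum_univ_four]
    rw [hc]; norm_num
  · simp [z2, dotProduct, Fin.sum_univ_four]
    rw [hc]; norm_num
  · simp [z1, Ut, dotProduct, mulVec, Fin.sum_univ_four, Matrix.diagonal]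
  · simp [z2, Ut, dotProduct, mulVec, Fin.sum_univ_four, Matrix.diagonal]
  · rintro ⟨V, -, hcomm, hmap⟩
    have key : ∀ j : Fin 4, ![1, -1, Complex.I, -Complex.I] j ≠ Complex.I → V 2 j = 0 := by
      intro j hj
      have h := congrFun (congrFun hcomm 2) j
      rw [Ut, Matrix.mul_diagonal, Matrix.diagonal_mul] at h
      simp only [Matrix.cons_val_two, Matrix.tail_cons, Matrix.head_cons] at h
      by_contra hV
      rw [mul_comm Complex.I] at h; exact hj (mul_left_cancel₀ hV h)
    have h20 : V 2 0 = 0 := key 0 (by simp [Complex.ext_iff])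
    have h21 : V 2 1 = 0 := key 1 (by simp [Complex.ext_iff])
    have := congrFun hmap 2
    simp [z1, z2, mulVec, dotProduct, Fin.sum_univ_four, h20, h21] at this
    exact hs this.symm
end
end

section
/- Let U be a 3×3 unitary matrix with eigenvalues e^{iφ₁}, e^{iφ₂}, e^{iφ₃}, let z be a unit vector, Θ = span{z}^⊥, A = Π₁U|_Θ, ω = ⟨z, Uz⟩. If ω lies on the boundary of the numerical range of U, say ω = a·e^{iφ₁} + (1−a)·e^{iφ₂} for some a ∈ [0,1], then the eigenvalues of A are e^{iφ₃} and (1−a)e^{iφ₁} + a e^{iφ₂}. -/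
noncomputable section
open scoped InnerProductSpace
open Polynomial
open scoped Matrix
set_option maxHeartbeats 1000000

lemma my_charpoly_fin_two (M : Matrix (Fin 2) (Fin 2) ℂ) :
    M.charpoly = X ^ 2 - C M.trace * X + C M.det := by
  rw [Matrix.charpoly, Matrix.det_fin_two, Matrix.trace_fin_two, Matrix.det_fin_two]
  rw [Matrix.charmatrix_apply_eq, Matrix.charmatrix_apply_eq,
    Matrix.charmatrix_apply_ne _ _ _ (by decide : (0 : Fin 2) ≠ 1),
    Matrix.charmatrix_apply_ne _ _ _ (by decide : (1 : Fin 2) ≠ 0)]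
  simp only [map_add, map_sub, map_mul]
  ring

theorem stmt14 (U : E3 →L[ℂ] E3) (hU : U ∈ unitary (E3 →L[ℂ] E3))
    (z : E3) (hz : ‖z‖ = 1) (φ1 φ2 φ3 : ℝ)
    (hUchar : LinearMap.charpoly U.toLinearMap =
      (X - C (Complex.exp (φ1 * Complex.I))) * (X - C (Complex.exp (φ2 * Complex.I))) *
        (X - C (Complex.exp (φ3 * Complex.I))))
    (a : ℝ) (ha : a ∈ Set.Icc (0 : ℝ) 1)
    (hω : ⟪z, U z⟫_ℂ =
      (a : ℂ) * Complex.exp (φ1 * Complex.I) + (1 - (a : ℂ)) * Complex.exp (φ2 * Complex.I)) :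
    LinearMap.charpoly (Aop U z) =
      (X - C (Complex.exp (φ3 * Complex.I))) *
        (X - C ((1 - (a : ℂ)) * Complex.exp (φ1 * Complex.I) +
          (a : ℂ) * Complex.exp (φ2 * Complex.I))) := by
  set e1 := Complex.exp (φ1 * Complex.I) with he1
  set e2 := Complex.exp (φ2 * Complex.I) with he2
  set e3 := Complex.exp (φ3 * Complex.I) with he3
  have hz0 : z ≠ 0 := by
    intro h; rw [h, norm_zero] at hz; norm_num at hz
  haveI : Fact (Module.finrank ℂ E3 = 2 + 1) := ⟨by simp⟩
  let b : OrthonormalBasis (Fin 2) ℂ (Theta z) :=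
    OrthonormalBasis.fromOrthogonalSpanSingleton 2 hz0
  have hmem : ∀ i : Fin 2, ((b i : E3)) ∈ Theta z := fun i => (b i).2
  have hiz : ∀ i : Fin 2, ⟪z, (b i : E3)⟫_ℂ = 0 := fun i =>
    (Submodule.mem_orthogonal _ _).1 (hmem i) z (Submodule.mem_span_singleton_self z)
  have hbb : ∀ i j : Fin 2, ⟪(b i : E3), (b j : E3)⟫_ℂ = if i = j then 1 else 0 := by
    intro i j
    have := orthonormal_iff_ite.mp b.orthonormal i j
    rwa [Submodule.coe_inner] at this
  -- the combined orthonormal family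
  set v : Fin 3 → E3 := ![z, (b 0 : E3), (b 1 : E3)] with hv
  have hon : Orthonormal ℂ v := by
    rw [orthonormal_iff_ite]
    have hzz : ⟪z, z⟫_ℂ = 1 := by
      rw [inner_self_eq_norm_sq_to_K, hz]; norm_num
    have hzi : ∀ i : Fin 2, ⟪(b i : E3), z⟫_ℂ = 0 := by
      intro i
      rw [← inner_conj_symm, hiz i, map_zero]
    intro i j
    fin_cases i <;> fin_cases j <;>
      simp [v, hzz, hiz 0, hiz 1, hzi 0, hzi 1, hbb 0 0, hbb 0 1, hbb 1 0, hbb 1 1,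
        hz, (show ‖(b 0 : E3)‖ = 1 from b.orthonormal.norm_eq_one 0),
        (show ‖(b 1 : E3)‖ = 1 from b.orthonormal.norm_eq_one 1)]
  have hcard : Fintype.card (Fin 3) = Module.finrank ℂ E3 := by simp
  let bas : Module.Basis (Fin 3) ℂ E3 := basisOfOrthonormalOfCardEqFinrank hon hcard
  have hbas : ⇑bas = v := coe_basisOfOrthonormalOfCardEqFinrank hon hcard
  let c : OrthonormalBasis (Fin 3) ℂ E3 := bas.toOrthonormalBasis (by rwa [hbas])
  have hcv : ⇑c = v := by
    simp only [c, Module.Basis.coe_toOrthonormalBasis, hbas]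
  have hctb : c.toBasis = bas := by
    apply Module.Basis.eq_of_apply_eq
    intro i
    simp [hcv, hbas]
  set M : Matrix (Fin 3) (Fin 3) ℂ := LinearMap.toMatrix c.toBasis c.toBasis U.toLinearMap with hM
  have hMij : ∀ i j, M i j = ⟪v i, U (v j)⟫_ℂ := by
    intro i j
    rw [hM, LinearMap.toMatrix_apply, c.coe_toBasis_repr_apply, c.repr_apply_apply]
    simp only [OrthonormalBasis.coe_toBasis, hcv]
    rfl
  -- unitarity of M
  have h1 : LinearMap.toContinuousLinearMap U.toLinearMap = U := by
    apply ContinuousLinearMap.coe_injective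
    exact LinearMap.coe_toContinuousLinearMap _
  have hadj : LinearMap.adjoint U.toLinearMap = (star U).toLinearMap := by
    rw [LinearMap.adjoint_eq_toCLM_adjoint, h1, ContinuousLinearMap.star_eq_adjoint]
  have hMu : M * Mᴴ = 1 := by
    have hcomp : U.toLinearMap * (star U).toLinearMap = LinearMap.id := by
      have h2 := Unitary.mul_star_self_of_mem hU
      apply LinearMap.ext
      intro x
      have h3 : (U * star U) x = (1 : E3 →L[ℂ] E3) x := by rw [h2]
      simpa using h3
    have hstar : Mᴴ = LinearMap.toMatrix c.toBasis c.toBasis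
        (LinearMap.adjoint U.toLinearMap) := by
      rw [LinearMap.toMatrix_adjoint c c]
    rw [hstar, hM, ← LinearMap.toMatrix_mul, hadj, hcomp, LinearMap.toMatrix_id]
  -- characteristic polynomial of M
  have hchar : M.charpoly = (X - C e1) * (X - C e2) * (X - C e3) := by
    rw [hM, LinearMap.charpoly_toMatrix]; exact hUchar
  have hexp : (X - C e1) * (X - C e2) * (X - C e3) =
      X ^ 3 - C (e1 + e2 + e3) * X ^ 2 + C (e1 * e2 + e1 * e3 + e2 * e3) * X
        - C (e1 * e2 * e3) := by
    simp only [C_add, C_mul]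
    ring
  have hdet : M.det = e1 * e2 * e3 := by
    rw [Matrix.det_eq_sign_charpoly_coeff, hchar, hexp]
    simp only [coeff_add, coeff_sub, coeff_C_mul, coeff_X_pow, coeff_C, coeff_X]
    norm_num
  have htr : M.trace = e1 + e2 + e3 := by
    rw [Matrix.trace_eq_neg_charpoly_coeff, hchar, hexp]
    simp only [Fintype.card_fin]
    norm_num [coeff_add, coeff_sub, coeff_C_mul, coeff_X_pow, coeff_C, coeff_X, add_mul, sub_mul]
  -- the matrix of Aop
  set N : Matrix (Fin 2) (Fin 2) ℂ :=
    LinearMap.toMatrix b.toBasis b.toBasis (Aop U z) with hN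
  have hNij : ∀ i j, N i j = ⟪(b i : E3), U (b j : E3)⟫_ℂ := by
    intro i j
    rw [hN, LinearMap.toMatrix_apply, b.coe_toBasis_repr_apply, b.repr_apply_apply]
    simp only [OrthonormalBasis.coe_toBasis, Aop, LinearMap.comp_apply,
      ContinuousLinearMap.coe_coe, Submodule.coe_subtype]
    exact Submodule.inner_orthogonalProjectionOnto_eq_of_mem_left (K := Theta z) (b i) (U (b j : E3))
  have hv1 : v 1 = (b 0 : E3) := rfl
  have hv2 : v 2 = (b 1 : E3) := rfl
  have hv0 : v 0 = z := rfl
  have hN00 : N 0 0 = M 1 1 := by rw [hNij, hMij]; rfl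
  have hN01 : N 0 1 = M 1 2 := by rw [hNij, hMij]; rfl
  have hN10 : N 1 0 = M 2 1 := by rw [hNij, hMij]; rfl
  have hN11 : N 1 1 = M 2 2 := by rw [hNij, hMij]; rfl
  have hM00 : M 0 0 = (a : ℂ) * e1 + (1 - (a : ℂ)) * e2 := by
    rw [hMij]; exact hω
  -- adjugate identity
  have hadjug : M.adjugate = M.det • Mᴴ := by
    calc M.adjugate = M.adjugate * (M * Mᴴ) := by rw [hMu, mul_one]
      _ = (M.adjugate * M) * Mᴴ := by rw [mul_assoc]
      _ = (M.det • (1 : Matrix (Fin 3) (Fin 3) ℂ)) * Mᴴ := by rw [Matrix.adjugate_mul]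
      _ = M.det • Mᴴ := by rw [Matrix.smul_mul, one_mul]
  have hNdet : N.det = M.det * (starRingEnd ℂ) (M 0 0) := by
    rw [Matrix.det_fin_two, hN00, hN01, hN10, hN11]
    have h0 : M.adjugate 0 0 = M 1 1 * M 2 2 - M 1 2 * M 2 1 := by
      rw [Matrix.adjugate_fin_three]; rfl
    have h1 : (M.det • Mᴴ) 0 0 = M.det * (starRingEnd ℂ) (M 0 0) := by
      simp [Matrix.conjTranspose_apply]
    rw [← h0, hadjug, h1]
  have hNtr : N.trace = M 1 1 + M 2 2 := by
    rw [Matrix.trace_fin_two, hN00, hN11]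
  have hMtr3 : M.trace = M 0 0 + M 1 1 + M 2 2 := Matrix.trace_fin_three M
  -- conjugate computations
  have hc1 : (starRingEnd ℂ) e1 = Complex.exp (-(φ1 * Complex.I)) := by
    rw [he1, ← Complex.exp_conj]
    congr 1
    simp [Complex.conj_I]
  have hc2 : (starRingEnd ℂ) e2 = Complex.exp (-(φ2 * Complex.I)) := by
    rw [he2, ← Complex.exp_conj]
    congr 1
    simp [Complex.conj_I]
  have hu1 : e1 * Complex.exp (-(φ1 * Complex.I)) = 1 := by
    rw [he1, ← Complex.exp_add]; simp
  have hu2 : e2 * Complex.exp (-(φ2 * Complex.I)) = 1 := by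
    rw [he2, ← Complex.exp_add]; simp
  have hNdet' : N.det = e3 * ((1 - (a : ℂ)) * e1 + (a : ℂ) * e2) := by
    rw [hNdet, hdet, hM00]
    simp only [map_add, map_mul, map_sub, map_one, Complex.conj_ofReal, hc1, hc2]
    have : e1 * e2 * e3 * ((a : ℂ) * Complex.exp (-(φ1 * Complex.I)) +
        (1 - (a : ℂ)) * Complex.exp (-(φ2 * Complex.I))) =
        (e1 * Complex.exp (-(φ1 * Complex.I))) * ((a : ℂ) * e2 * e3) +
        (e2 * Complex.exp (-(φ2 * Complex.I))) * ((1 - (a : ℂ)) * e1 * e3) := by ring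
    rw [this, hu1, hu2]
    ring
  have hNtr' : N.trace = e3 + ((1 - (a : ℂ)) * e1 + (a : ℂ) * e2) := by
    have h12 : M 1 1 + M 2 2 = M.trace - M 0 0 := by rw [hMtr3]; ring
    rw [hNtr, h12, htr, hM00]
    ring
  -- conclude
  have hA : LinearMap.charpoly (Aop U z) = N.charpoly :=
    (LinearMap.charpoly_toMatrix _ _).symm
  rw [hA, my_charpoly_fin_two, hNtr', hNdet']
  simp only [C_add, C_mul, C_sub, C_1]
  ring
end
end
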